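/- arXiv:cond-mat/0303625 — 2 statements merged into one kernel-verified Lean document; each statement's English description precedes it below -/
import Mathlib

section
/- Let P : Ω → 𝒫 and F : Ω → ℱ be random variables on a finite probability space (Ω, ℙ), with 𝒫 and ℱ finite, and assume ℙ(P = p) > 0 for every p ∈ 𝒫. Then the predictive information is bounded by the statistical complexity: I[F; P] ≤ H[ε∘P]. -/
open scoped BigOperators
attribute [local instance] Classical.propDecidable

/-- Probability of an event on a finite probability space given by a weight function. -/
noncomputable def prb {Ω : Type*} [Fintype Ω] (μ : Ω → ℝ) (E : Set Ω) : ℝ :=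
  ∑ ω, if ω ∈ E then μ ω else 0

/-- The distribution of a random variable `X`. -/
noncomputable def pdist {Ω α : Type*} [Fintype Ω] (μ : Ω → ℝ) (X : Ω → α) (x : α) : ℝ :=
  prb μ {ω | X ω = x}

/-- Shannon entropy `H[X]` (in nats; `Real.log 0 = 0` gives the convention `0·log 0 = 0`). -/
noncomputable def Hent {Ω α : Type*} [Fintype Ω] [Fintype α] (μ : Ω → ℝ) (X : Ω → α) : ℝ :=
  -∑ x, pdist μ X x * Real.log (pdist μ X x)

/-- Mutual information `I[X;Y] = H[X] + H[Y] - H[X,Y]`. -/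
noncomputable def Iinfo {Ω α β : Type*} [Fintype Ω] [Fintype α] [Fintype β]
    (μ : Ω → ℝ) (X : Ω → α) (Y : Ω → β) : ℝ :=
  Hent μ X + Hent μ Y - Hent μ (fun ω => (X ω, Y ω))

/-- Conditional entropy `H[X|Y] = H[X,Y] - H[Y]`. -/
noncomputable def condH {Ω α β : Type*} [Fintype Ω] [Fintype α] [Fintype β]
    (μ : Ω → ℝ) (X : Ω → α) (Y : Ω → β) : ℝ :=
  Hent μ (fun ω => (X ω, Y ω)) - Hent μ Y

/-- Conditional probability `ℙ(E | F)`. -/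
noncomputable def cprob {Ω : Type*} [Fintype Ω] (μ : Ω → ℝ) (E F : Set Ω) : ℝ :=
  prb μ (E ∩ F) / prb μ F

/-- Causal equivalence of pasts: `p ∼ p'` iff they give the same conditional
distribution over futures. -/
def CausalEquiv {Ω Pst Fut : Type*} [Fintype Ω] (μ : Ω → ℝ)
    (P : Ω → Pst) (F : Ω → Fut) (p p' : Pst) : Prop :=
  ∀ f : Fut, cprob μ {ω | F ω = f} {ω | P ω = p} = cprob μ {ω | F ω = f} {ω | P ω = p'}

/-- Causal equivalence as a setoid on the space of pasts. -/
def causalSetoid {Ω Pst Fut : Type*} [Fintype Ω] (μ : Ω → ℝ)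
    (P : Ω → Pst) (F : Ω → Fut) : Setoid Pst where
  r := CausalEquiv μ P F
  iseqv := ⟨fun _ _ => rfl, fun h f => (h f).symm, fun h h' f => (h f).trans (h' f)⟩

/-- The causal state map `ε` sends a past to its causal equivalence class. -/
def causalState {Ω Pst Fut : Type*} [Fintype Ω] (μ : Ω → ℝ)
    (P : Ω → Pst) (F : Ω → Fut) (p : Pst) : Quotient (causalSetoid μ P F) :=
  Quotient.mk (causalSetoid μ P F) p

/-!
Since `ℙ(F = f | P = p)` depends on `p` only through its causal state, the joint law of `(F, P)`
factors as `r(f, ε p) · ℙ(P = p)`; so `ε ∘ P` is a sufficient statistic and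
`H[F | P] = H[F | ε ∘ P]`. Hence `I[F; P] = H[F] - H[F | ε ∘ P] = I[F; ε ∘ P] ≤ H[ε ∘ P]`,
the last step being `H[F] ≤ H[F, ε ∘ P]`.
-/

section Distribution

variable {Ω α β γ : Type*} [Fintype Ω]

lemma pdist_eq_sum (μ : Ω → ℝ) (X : Ω → α) (x : α) :
    pdist μ X x = ∑ ω, if X ω = x then μ ω else 0 :=
  rfl

lemma pdist_nonneg {μ : Ω → ℝ} (hμ : ∀ ω, 0 ≤ μ ω) (X : Ω → α) (x : α) :
    0 ≤ pdist μ X x :=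
  Finset.sum_nonneg fun ω _ => by split_ifs <;> simp [hμ ω]

variable [Fintype α]

lemma pdist_comp (μ : Ω → ℝ) (X : Ω → α) (t : α → γ) (c : γ) :
    pdist μ (fun ω => t (X ω)) c = ∑ a, if t a = c then pdist μ X a else 0 := by
  calc pdist μ (fun ω => t (X ω)) c
      = ∑ ω, ∑ a, if X ω = a then (if t a = c then μ ω else 0) else 0 := by
        simp [pdist_eq_sum]
    _ = _ := by
        rw [Finset.sum_comm]
        refine Finset.sum_congr rfl fun a _ => ?_
        split_ifs <;> simp [pdist_eq_sum, *]

lemma sum_pdist_comp_mul (μ : Ω → ℝ) (X : Ω → α) (t : α → γ) [Fintype γ] (g : γ → ℝ) :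
    ∑ c, pdist μ (fun ω => t (X ω)) c * g c = ∑ a, pdist μ X a * g (t a) := by
  simp only [pdist_comp, Finset.sum_mul, ite_mul, zero_mul]
  rw [Finset.sum_comm]
  refine Finset.sum_congr rfl fun a _ => ?_
  rw [Finset.sum_ite_eq]
  simp

variable [Fintype β]

lemma pdist_eq_sum_pair_fst (μ : Ω → ℝ) (X : Ω → α) (Y : Ω → β) (x : α) :
    pdist μ X x = ∑ y, pdist μ (fun ω => (X ω, Y ω)) (x, y) := by
  simpa [Fintype.sum_prod_type_right] using pdist_comp μ (fun ω => (X ω, Y ω)) Prod.fst x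

lemma pdist_eq_sum_pair_snd (μ : Ω → ℝ) (X : Ω → α) (Y : Ω → β) (y : β) :
    pdist μ Y y = ∑ x, pdist μ (fun ω => (X ω, Y ω)) (x, y) := by
  simpa [Fintype.sum_prod_type] using pdist_comp μ (fun ω => (X ω, Y ω)) Prod.snd y

lemma pdist_pair_comp_right_eq_mul (μ : Ω → ℝ) (X : Ω → α) (Y : Ω → β) (t : β → γ)
    (r : α → γ → ℝ) (hr : ∀ a b, pdist μ (fun ω => (X ω, Y ω)) (a, b) = r a (t b) * pdist μ Y b)
    (a : α) (c : γ) :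
    pdist μ (fun ω => (X ω, t (Y ω))) (a, c) = r a c * pdist μ (fun ω => t (Y ω)) c := by
  have h := pdist_comp μ (fun ω => (X ω, Y ω)) (fun q => (q.1, t q.2)) (a, c)
  rw [Fintype.sum_prod_type, Finset.sum_comm] at h
  rw [h, pdist_comp, Finset.mul_sum]
  refine Finset.sum_congr rfl fun b _ => ?_
  by_cases hb : t b = c <;> simp [hr, hb]

end Distribution

section Entropy

variable {Ω α β γ : Type*} [Fintype Ω] [Fintype α] [Fintype β]

lemma Hent_eq_sum_negMulLog (μ : Ω → ℝ) (X : Ω → α) :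
    Hent μ X = ∑ x, Real.negMulLog (pdist μ X x) := by
  simp [Hent, Real.negMulLog, Finset.sum_neg_distrib]

lemma Hent_le_Hent_pair {μ : Ω → ℝ} (hμ : ∀ ω, 0 ≤ μ ω) (X : Ω → α) (Y : Ω → β) :
    Hent μ X ≤ Hent μ (fun ω => (X ω, Y ω)) := by
  unfold Hent
  rw [neg_le_neg_iff, Fintype.sum_prod_type]
  refine Finset.sum_le_sum fun x _ => ?_
  rw [pdist_eq_sum_pair_fst μ X Y x, Finset.sum_mul]
  refine Finset.sum_le_sum fun y _ => ?_
  rcases (pdist_nonneg hμ (fun ω => (X ω, Y ω)) (x, y)).eq_or_lt with hzero | hpos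
  · rw [← hzero]
    simp
  · have hle : pdist μ (fun ω => (X ω, Y ω)) (x, y) ≤
        ∑ y', pdist μ (fun ω => (X ω, Y ω)) (x, y') :=
      Finset.single_le_sum (fun y' _ => pdist_nonneg hμ _ (x, y')) (Finset.mem_univ y)
    exact mul_le_mul_of_nonneg_left (Real.log_le_log hpos hle) hpos.le

lemma Iinfo_eq_Hent_sub_condH (μ : Ω → ℝ) (X : Ω → α) (Y : Ω → β) :
    Iinfo μ X Y = Hent μ X - condH μ X Y := by
  unfold Iinfo condH
  ring

lemma Iinfo_le_Hent_right {μ : Ω → ℝ} (hμ : ∀ ω, 0 ≤ μ ω) (X : Ω → α) (Y : Ω → β) :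
    Iinfo μ X Y ≤ Hent μ Y := by
  unfold Iinfo
  linarith [Hent_le_Hent_pair hμ X Y]

lemma condH_eq_sum_mul_negMulLog (μ : Ω → ℝ) (X : Ω → α) (Y : Ω → β) (r : α → β → ℝ)
    (hr : ∀ a b, pdist μ (fun ω => (X ω, Y ω)) (a, b) = r a b * pdist μ Y b) :
    condH μ X Y = ∑ b, pdist μ Y b * ∑ a, Real.negMulLog (r a b) := by
  have hmarginal :
      ∀ b, ∑ a, r a b * Real.negMulLog (pdist μ Y b) = Real.negMulLog (pdist μ Y b) := by
    intro b
    have hsum : (∑ a, r a b) * pdist μ Y b = pdist μ Y b := by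
      conv_rhs => rw [pdist_eq_sum_pair_snd μ X Y b]
      simp only [Finset.sum_mul, hr]
    rw [← Finset.sum_mul, Real.negMulLog]
    linear_combination (-Real.log (pdist μ Y b)) * hsum
  unfold condH
  rw [Hent_eq_sum_negMulLog, Hent_eq_sum_negMulLog, Fintype.sum_prod_type_right]
  simp only [hr, Real.negMulLog_mul, Finset.sum_add_distrib, hmarginal, ← Finset.mul_sum]
  ring

lemma condH_comp_eq_of_pdist_pair_eq_mul [Fintype γ] (μ : Ω → ℝ) (X : Ω → α) (Y : Ω → β)
    (t : β → γ) (r : α → γ → ℝ) (hr : ∀ a b, pdist μ (fun ω => (X ω, Y ω)) (a, b) = r a (t b) * pdist μ Y b) :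
    condH μ X (fun ω => t (Y ω)) = condH μ X Y := by
  rw [condH_eq_sum_mul_negMulLog μ X Y (fun a b => r a (t b)) hr,
    condH_eq_sum_mul_negMulLog μ X _ r (pdist_pair_comp_right_eq_mul μ X Y t r hr),
    sum_pdist_comp_mul μ Y t fun c => ∑ a, Real.negMulLog (r a c)]

end Entropy

section CausalState

variable {Ω Pst Fut : Type*} [Fintype Ω]

noncomputable def causalCprob (μ : Ω → ℝ) (P : Ω → Pst) (F : Ω → Fut) (f : Fut) :
    Quotient (causalSetoid μ P F) → ℝ :=
  Quotient.lift (fun p => cprob μ {ω | F ω = f} {ω | P ω = p}) fun _ _ h => h f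

lemma pdist_pair_eq_causalCprob_mul {μ : Ω → ℝ} {P : Ω → Pst} (F : Ω → Fut)
    (hP : ∀ p, 0 < prb μ {ω | P ω = p}) (f : Fut) (p : Pst) :
    pdist μ (fun ω => (F ω, P ω)) (f, p) =
      causalCprob μ P F f (causalState μ P F p) * pdist μ P p := by
  have hjoint :
      pdist μ (fun ω => (F ω, P ω)) (f, p) = prb μ ({ω | F ω = f} ∩ {ω | P ω = p}) := by
    unfold pdist
    congr 1
    ext ω
    simp [Prod.ext_iff]
  rw [hjoint]
  exact (div_mul_cancel₀ _ (hP p).ne').symm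

end CausalState

theorem predictive_info_le_statistical_complexity_general {Ω Pst Fut : Type*}
    [Fintype Ω] [Fintype Pst] [Fintype Fut]
    (μ : Ω → ℝ) (hμ0 : ∀ ω, 0 ≤ μ ω)
    (P : Ω → Pst) (F : Ω → Fut)
    (hP : ∀ p : Pst, 0 < prb μ {ω | P ω = p}) :
    Iinfo μ F P ≤ Hent μ (fun ω => causalState μ P F (P ω)) := by
  have hcond : condH μ F (fun ω => causalState μ P F (P ω)) = condH μ F P :=
    condH_comp_eq_of_pdist_pair_eq_mul μ F P _ _ (pdist_pair_eq_causalCprob_mul F hP)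
  calc Iinfo μ F P = Iinfo μ F (fun ω => causalState μ P F (P ω)) := by
        rw [Iinfo_eq_Hent_sub_condH, Iinfo_eq_Hent_sub_condH, hcond]
    _ ≤ Hent μ (fun ω => causalState μ P F (P ω)) := Iinfo_le_Hent_right hμ0 _ _

/-- the predictive information is bounded by the statistical complexity:
`I[F; P] ≤ H[ε∘P]`. -/
theorem predictive_info_le_statistical_complexity {Ω Pst Fut : Type*}
    [Fintype Ω] [Fintype Pst] [Fintype Fut]
    (μ : Ω → ℝ) (hμ0 : ∀ ω, 0 ≤ μ ω) (hμ1 : ∑ ω, μ ω = 1)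
    (P : Ω → Pst) (F : Ω → Fut)
    (hP : ∀ p : Pst, 0 < prb μ {ω | P ω = p}) :
    Iinfo μ F P ≤ Hent μ (fun ω => causalState μ P F (P ω)) :=
  predictive_info_le_statistical_complexity_general μ hμ0 P F hP
end

section
/- Let P : Ω → 𝒫 and F : Ω → ℱ be random variables on a finite probability space (Ω, ℙ), with 𝒫 and ℱ finite, and assume ℙ(P = p) > 0 for every p ∈ 𝒫. Then the conditional entropy of the future given the past equals the conditional entropy of the future given the causal state: H[F | P] = H[F | ε∘P]. -/
open scoped BigOperators
attribute [local instance] Classical.propDecidable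

/-!
Write `H[X|Y] = -∑ ℙ(X = x, Y = y) log ℙ(X = x | Y = y)`. If `g` only identifies values of `Y`
with the same conditional law of `X`, then `ℙ(X = x | g Y = g y) = ℙ(X = x | Y = y)`, since the
joint law on the fibre of `g y` is this conditional probability times the marginal of `Y`.
Grouping the sum for `H[X|Y]` by the fibres of `g` then yields `H[X|g Y]`. The causal state map
is such a `g`: causally equivalent pasts induce the same conditional law of the future.
-/

open Finset

section Entropy

variable {Ω α β γ : Type*} [Fintype Ω] {μ : Ω → ℝ}

lemma prb_nonneg (hμ0 : ∀ ω, 0 ≤ μ ω) (E : Set Ω) : 0 ≤ prb μ E :=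
  sum_nonneg fun ω _ => by grind

lemma prb_mono (hμ0 : ∀ ω, 0 ≤ μ ω) {E E' : Set Ω} (h : E ⊆ E') : prb μ E ≤ prb μ E' :=
  sum_le_sum fun ω _ => by grind

lemma prb_eq_zero_of_subset (hμ0 : ∀ ω, 0 ≤ μ ω) {E E' : Set Ω} (h : E ⊆ E')
    (h' : prb μ E' = 0) : prb μ E = 0 :=
  le_antisymm (h' ▸ prb_mono hμ0 h) (prb_nonneg hμ0 E)

lemma prb_inter_preimage_eq_sum (E : Set Ω) (Y : Ω → β) (S : Finset β) :
    prb μ (E ∩ {ω | Y ω ∈ S}) = ∑ y ∈ S, prb μ (E ∩ {ω | Y ω = y}) := by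
  unfold prb
  rw [sum_comm]
  refine sum_congr rfl fun ω _ => ?_
  by_cases hE : ω ∈ E <;> simp [hE, sum_ite_eq]

lemma pdist_pair (X : Ω → α) (Y : Ω → β) (x : α) (y : β) :
    pdist μ (fun ω => (X ω, Y ω)) (x, y) = prb μ ({ω | X ω = x} ∩ {ω | Y ω = y}) := by
  unfold pdist
  congr 1
  ext ω
  simp

lemma sum_pdist_pair [Fintype α] (X : Ω → α) (Y : Ω → β) (y : β) :
    ∑ x, pdist μ (fun ω => (X ω, Y ω)) (x, y) = pdist μ Y y := by
  have h := prb_inter_preimage_eq_sum (μ := μ) {ω | Y ω = y} X univ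
  simp only [mem_univ, Set.ofPred_true, Set.inter_univ] at h
  simp only [pdist_pair, Set.inter_comm {ω | X ω = _}]
  exact h.symm

lemma pdist_pair_comp [Fintype β] (X : Ω → α) (Y : Ω → β) (g : β → γ) (x : α) (z : γ) :
    pdist μ (fun ω => (X ω, g (Y ω))) (x, z)
      = ∑ y with g y = z, pdist μ (fun ω => (X ω, Y ω)) (x, y) := by
  simpa [pdist_pair] using prb_inter_preimage_eq_sum (μ := μ) {ω | X ω = x} Y {y | g y = z}

lemma pdist_comp_s12 [Fintype β] (Y : Ω → β) (g : β → γ) (z : γ) :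
    pdist μ (fun ω => g (Y ω)) z = ∑ y with g y = z, pdist μ Y y := by
  simpa [pdist] using prb_inter_preimage_eq_sum (μ := μ) Set.univ Y {y | g y = z}

lemma cprob_eq_div (X : Ω → α) (Y : Ω → β) (x : α) (y : β) :
    cprob μ {ω | X ω = x} {ω | Y ω = y}
      = pdist μ (fun ω => (X ω, Y ω)) (x, y) / pdist μ Y y := by
  rw [pdist_pair]
  rfl

lemma pdist_pair_eq_zero_of_pdist_eq_zero (hμ0 : ∀ ω, 0 ≤ μ ω) (X : Ω → α) {Y : Ω → β}
    (x : α) {y : β} (hy : pdist μ Y y = 0) : pdist μ (fun ω => (X ω, Y ω)) (x, y) = 0 := by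
  rw [pdist_pair]
  exact prb_eq_zero_of_subset hμ0 Set.inter_subset_right hy

lemma pdist_pair_eq_cprob_mul (hμ0 : ∀ ω, 0 ≤ μ ω) (X : Ω → α) (Y : Ω → β) (x : α) (y : β) :
    pdist μ (fun ω => (X ω, Y ω)) (x, y)
      = cprob μ {ω | X ω = x} {ω | Y ω = y} * pdist μ Y y := by
  rw [cprob_eq_div]
  by_cases hy : pdist μ Y y = 0
  · simp [hy, pdist_pair_eq_zero_of_pdist_eq_zero hμ0 X x hy]
  · exact (div_mul_cancel₀ _ hy).symm

lemma condH_eq_neg_sum_log_cprob [Fintype α] [Fintype β] (hμ0 : ∀ ω, 0 ≤ μ ω)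
    (X : Ω → α) (Y : Ω → β) :
    condH μ X Y = -∑ y, ∑ x, pdist μ (fun ω => (X ω, Y ω)) (x, y) *
      Real.log (cprob μ {ω | X ω = x} {ω | Y ω = y}) := by
  have hHY : Hent μ Y = -∑ y, ∑ x, pdist μ (fun ω => (X ω, Y ω)) (x, y) *
      Real.log (pdist μ Y y) := by
    simp only [Hent, ← sum_mul, sum_pdist_pair]
  rw [condH, Hent, Fintype.sum_prod_type, sum_comm, hHY, neg_sub_neg, ← sum_sub_distrib,
    ← sum_neg_distrib]
  refine sum_congr rfl fun y _ => ?_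
  rw [← sum_sub_distrib, ← sum_neg_distrib]
  refine sum_congr rfl fun x _ => ?_
  rw [cprob_eq_div]
  by_cases hxy : pdist μ (fun ω => (X ω, Y ω)) (x, y) = 0
  · simp [hxy]
  · have hy : pdist μ Y y ≠ 0 := fun hy => hxy (pdist_pair_eq_zero_of_pdist_eq_zero hμ0 X x hy)
    rw [Real.log_div hxy hy]
    ring

lemma cprob_comp_eq [Fintype β] (hμ0 : ∀ ω, 0 ≤ μ ω) (X : Ω → α) (Y : Ω → β) (g : β → γ)
    (hg : ∀ y y', g y = g y' → ∀ x, cprob μ {ω | X ω = x} {ω | Y ω = y}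
      = cprob μ {ω | X ω = x} {ω | Y ω = y'})
    (x : α) (y : β) :
    cprob μ {ω | X ω = x} {ω | g (Y ω) = g y} = cprob μ {ω | X ω = x} {ω | Y ω = y} := by
  have hjoint : pdist μ (fun ω => (X ω, g (Y ω))) (x, g y)
      = cprob μ {ω | X ω = x} {ω | Y ω = y} * pdist μ (fun ω => g (Y ω)) (g y) := by
    rw [pdist_pair_comp, pdist_comp_s12, mul_sum]
    refine sum_congr rfl fun y' hy' => ?_
    rw [pdist_pair_eq_cprob_mul hμ0, hg y' y (mem_filter.mp hy').2]
  rw [cprob_eq_div X (fun ω => g (Y ω)), hjoint]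
  by_cases hz : pdist μ (fun ω => g (Y ω)) (g y) = 0
  · -- a null fibre: both conditional probabilities are the junk value `_ / 0 = 0`
    have hy : pdist μ Y y = 0 :=
      prb_eq_zero_of_subset hμ0 (fun ω (h : Y ω = y) => congrArg g h) hz
    simp [hz, cprob_eq_div, hy]
  · exact mul_div_cancel_right₀ _ hz

lemma condH_comp_eq [Fintype α] [Fintype β] [Fintype γ] (hμ0 : ∀ ω, 0 ≤ μ ω)
    (X : Ω → α) (Y : Ω → β) (g : β → γ)
    (hg : ∀ x y, cprob μ {ω | X ω = x} {ω | g (Y ω) = g y}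
      = cprob μ {ω | X ω = x} {ω | Y ω = y}) :
    condH μ X (fun ω => g (Y ω)) = condH μ X Y := by
  rw [condH_eq_neg_sum_log_cprob hμ0, condH_eq_neg_sum_log_cprob hμ0, neg_inj]
  calc ∑ z, ∑ x, pdist μ (fun ω => (X ω, g (Y ω))) (x, z) *
        Real.log (cprob μ {ω | X ω = x} {ω | g (Y ω) = z})
      = ∑ z, ∑ y with g y = z, ∑ x, pdist μ (fun ω => (X ω, Y ω)) (x, y) *
          Real.log (cprob μ {ω | X ω = x} {ω | g (Y ω) = g y}) := by
        refine sum_congr rfl fun z _ => ?_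
        simp only [pdist_pair_comp, sum_mul]
        rw [sum_comm]
        refine sum_congr rfl fun y hy => ?_
        rw [(mem_filter.mp hy).2]
    _ = ∑ y, ∑ x, pdist μ (fun ω => (X ω, Y ω)) (x, y) *
          Real.log (cprob μ {ω | X ω = x} {ω | Y ω = y}) := by
        simp only [hg]
        exact sum_fiberwise univ g _

end Entropy

theorem condEntropy_past_eq_condEntropy_causalState_general {Ω Pst Fut : Type*}
    [Fintype Ω] [Fintype Pst] [Fintype Fut]
    (μ : Ω → ℝ) (hμ0 : ∀ ω, 0 ≤ μ ω)
    (P : Ω → Pst) (F : Ω → Fut) :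
    condH μ F P = condH μ F (fun ω => causalState μ P F (P ω)) :=
  (condH_comp_eq hμ0 F P (causalState μ P F)
    (cprob_comp_eq hμ0 F P _ fun _ _ h => Quotient.exact h)).symm

/-- the conditional entropy of the future given the past equals the
conditional entropy of the future given the causal state: `H[F|P] = H[F|ε∘P]`. -/
theorem condEntropy_past_eq_condEntropy_causalState {Ω Pst Fut : Type*}
    [Fintype Ω] [Fintype Pst] [Fintype Fut]
    (μ : Ω → ℝ) (hμ0 : ∀ ω, 0 ≤ μ ω) (hμ1 : ∑ ω, μ ω = 1)
    (P : Ω → Pst) (F : Ω → Fut)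
    (hP : ∀ p : Pst, 0 < prb μ {ω | P ω = p}) :
    condH μ F P = condH μ F (fun ω => causalState μ P F (P ω)) :=
  condEntropy_past_eq_condEntropy_causalState_general μ hμ0 P F
end
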